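/- arXiv:2506.10392 — 4 statements merged into one kernel-verified Lean document; each statement's English description precedes it below -/
import Mathlib

section
/- Let R be a commutative ring with identity and M a unitary R-module, and let R*M denote the Nagata idealization (the ring R × M with multiplication (r₁,m₁)(r₂,m₂) = (r₁r₂, r₁m₂ + r₂m₁)). Then the set of zero divisors of R*M equals (Z(R) ∪ Z(M)) × M, where Z(M) = {r ∈ R : rm = 0 for some nonzero m ∈ M}. -/
namespace TrivSqZeroExt

variable {R M : Type*}

theorem inr_ne_zero [Zero R] [Zero M] {m : M} (hm : m ≠ 0) : (inr m : TrivSqZeroExt R M) ≠ 0 :=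
  fun h => hm (congrArg snd h)

variable [Semiring R] [AddCommMonoid M] [Module R M] [Module Rᵐᵒᵖ M]

theorem mul_inr (x : TrivSqZeroExt R M) (m : M) : x * inr m = inr (x.fst • m) :=
  ext (mul_zero _) (by simp)

theorem exists_fst_mul_eq_zero_or_fst_smul_eq_zero {z w : TrivSqZeroExt R M} (hw : w ≠ 0)
    (h : z * w = 0) :
    (∃ y : R, y ≠ 0 ∧ z.fst * y = 0) ∨ ∃ m : M, m ≠ 0 ∧ z.fst • m = 0 := by
  by_cases hw₁ : w.fst = 0
  · have hw_inr : w = inr w.snd := ext hw₁ rfl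
    refine .inr ⟨w.snd, fun hw₂ => hw (by rw [hw_inr, hw₂, inr_zero]), ?_⟩
    rw [hw_inr, mul_inr, ← inr_zero] at h
    exact inr_injective h
  · exact .inl ⟨w.fst, hw₁, congrArg fst h⟩

variable [IsCentralScalar R M]

-- `z * inl y = inr (y • z.snd)`, so `inl y` annihilates `z` unless `inr (y • z.snd)` does.
theorem exists_mul_eq_zero_of_fst_mul_eq_zero {z : TrivSqZeroExt R M} {y : R} (hy : y ≠ 0)
    (h : z.fst * y = 0) : ∃ w, w ≠ 0 ∧ z * w = 0 := by
  by_cases hy_snd : y • z.snd = 0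
  · refine ⟨inl y, fun h' => hy (by simpa using congrArg fst h'), ext ?_ ?_⟩
    · simpa using h
    · simp [hy_snd]
  · refine ⟨inr (y • z.snd), inr_ne_zero hy_snd, ?_⟩
    rw [mul_inr, smul_smul, h, zero_smul, inr_zero]

theorem exists_ne_zero_mul_eq_zero_iff (z : TrivSqZeroExt R M) :
    (∃ w, w ≠ 0 ∧ z * w = 0) ↔
      (∃ y : R, y ≠ 0 ∧ z.fst * y = 0) ∨ ∃ m : M, m ≠ 0 ∧ z.fst • m = 0 := by
  refine ⟨fun ⟨_, hw, h⟩ => exists_fst_mul_eq_zero_or_fst_smul_eq_zero hw h, ?_⟩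
  rintro (⟨y, hy, h⟩ | ⟨m, hm, h⟩)
  · exact exists_mul_eq_zero_of_fst_mul_eq_zero hy h
  · exact ⟨inr m, inr_ne_zero hm, by rw [mul_inr, h, inr_zero]⟩

end TrivSqZeroExt

theorem stmt_12 (R M : Type*) [CommRing R] [AddCommGroup M] [Module R M]
    [Module Rᵐᵒᵖ M] [IsCentralScalar R M] :
    {z : TrivSqZeroExt R M | ∃ w, w ≠ 0 ∧ z * w = 0} =
      {z : TrivSqZeroExt R M |
        (∃ y : R, y ≠ 0 ∧ z.fst * y = 0) ∨ (∃ m : M, m ≠ 0 ∧ z.fst • m = 0)} :=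
  Set.ext TrivSqZeroExt.exists_ne_zero_mul_eq_zero_iff
end

section
/- Let p be a prime, α ≥ 1 an integer, and R = Z_p * (Z_p)^{α-1} the Nagata idealization of the Z_p-module (Z_p)^{α-1}. Then for every integer k ≥ 2, zp_k(R) = (p^{α-1}(p^k - (k+p-1)(p-1)^{k-1}) + k(p-1)^{k-1}) / p^{k+α-1}. -/
/-! Write `f i = (r i, m i)`. Then `∏ f i = 0` iff `∏ r i = 0` and
`∑ i, (∏ j ≠ i, r j) • m i = 0`. For fixed `r` the second condition is a linear equation in `m`:
it is vacuous when `r` has at least two zeros and cuts out a subgroup of index `|M|` when `r` has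
exactly one zero. There are `p ^ k - (p - 1) ^ k` tuples `r` with a zero, `k (p - 1) ^ (k - 1)` of
them with exactly one, and `|M| = p ^ (α - 1)`. -/

open Finset

namespace TrivSqZeroExt

variable {ι R M : Type*} [CommSemiring R] [AddCommMonoid M] [Module R M] [Module Rᵐᵒᵖ M]
  [IsCentralScalar R M]

theorem fst_prod (s : Finset ι) (f : ι → TrivSqZeroExt R M) :
    (∏ i ∈ s, f i).fst = ∏ i ∈ s, (f i).fst :=
  map_prod (fstHom R R M) f s

theorem snd_prod [DecidableEq ι] (s : Finset ι) (f : ι → TrivSqZeroExt R M) :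
    (∏ i ∈ s, f i).snd = ∑ i ∈ s, (∏ j ∈ s.erase i, (f j).fst) • (f i).snd := by
  induction s using Finset.induction with
  | empty => simp
  | @insert a s ha ih =>
    rw [prod_insert ha, snd_mul, ih, fst_prod, sum_insert ha, erase_insert ha, op_smul_eq_smul,
      smul_sum, add_comm]
    congr 1
    refine sum_congr rfl fun i hi => ?_
    rw [erase_insert_of_ne (ne_of_mem_of_not_mem hi ha).symm,
      prod_insert fun h => ha (mem_of_mem_erase h), smul_smul]

theorem prod_eq_zero_iff [DecidableEq ι] (s : Finset ι) (f : ι → TrivSqZeroExt R M) :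
    ∏ i ∈ s, f i = 0 ↔
      ∏ i ∈ s, (f i).fst = 0 ∧ ∑ i ∈ s, (∏ j ∈ s.erase i, (f j).fst) • (f i).snd = 0 := by
  rw [TrivSqZeroExt.ext_iff, fst_prod, snd_prod, fst_zero, snd_zero]

end TrivSqZeroExt

section LinearEquation

variable {ι F M : Type*} [Fintype ι] [DivisionRing F] [AddCommGroup M] [Module F M]

theorem card_sum_smul_eq_zero_mul_card {c : ι → F} (hc : c ≠ 0) :
    Nat.card {m : ι → M // ∑ i, c i • m i = 0} * Nat.card M = Nat.card (ι → M) := by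
  classical
  obtain ⟨i₀, hi₀⟩ : ∃ i, c i ≠ 0 := Function.ne_iff.mp hc
  let φ : (ι → M) →+ M :=
    AddMonoidHom.mk' (fun m => ∑ i, c i • m i) fun x y => by simp [smul_add, sum_add_distrib]
  have hφ : Function.Surjective φ := fun x =>
    ⟨Pi.single i₀ ((c i₀)⁻¹ • x), by simp [φ, Pi.single_apply, smul_smul, hi₀]⟩
  rw [← φ.ker.card_mul_index, AddSubgroup.index_ker, φ.range_eq_top.mpr hφ, AddSubgroup.card_top]
  rfl

theorem card_sum_smul_eq_zero [DecidableEq F] [Finite M] (c : ι → F) :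
    Nat.card {m : ι → M // ∑ i, c i • m i = 0} =
      if c = 0 then Nat.card M ^ Fintype.card ι else Nat.card M ^ (Fintype.card ι - 1) := by
  split_ifs with hc
  · subst hc
    simp [Nat.card_fun]
  · have hι : Fintype.card ι ≠ 0 :=
      (Fintype.card_pos_iff.mpr ⟨(Function.ne_iff.mp hc).choose⟩).ne'
    refine Nat.eq_of_mul_eq_mul_right (Nat.card_pos (α := M)) ?_
    rw [card_sum_smul_eq_zero_mul_card hc, pow_sub_one_mul hι, Nat.card_fun,
      Nat.card_eq_fintype_card (α := ι)]

end LinearEquation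

section ZeroPattern

variable {ι R : Type*} [Fintype ι] [DecidableEq ι]

theorem card_filter_prod_ne_zero [CommMonoidWithZero R] [NoZeroDivisors R] [Nontrivial R]
    [Fintype R] [DecidableEq R] :
    #{r : ι → R | ∏ i, r i ≠ 0} = (Fintype.card R - 1) ^ Fintype.card ι := by
  have : ({r : ι → R | ∏ i, r i ≠ 0} : Finset _) = Fintype.piFinset fun _ => {0}ᶜ := by
    ext r
    simp [prod_ne_zero_iff]
  rw [this, Fintype.card_piFinset, prod_const, card_compl, card_singleton, card_univ]

theorem card_filter_eq_zero_and_forall_ne_ne_zero [Zero R] [Fintype R]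
    [DecidableEq R] (i : ι) :
    #{r : ι → R | r i = 0 ∧ ∀ j ≠ i, r j ≠ 0} = (Fintype.card R - 1) ^ (Fintype.card ι - 1) := by
  have : ({r : ι → R | r i = 0 ∧ ∀ j ≠ i, r j ≠ 0} : Finset _) =
      Fintype.piFinset fun j => if j = i then {0} else {0}ᶜ := by
    ext r
    simp only [mem_filter, mem_univ, true_and, Fintype.mem_piFinset]
    constructor
    · rintro ⟨hi, hne⟩ j
      split_ifs with hj
      · simp [hj, hi]
      · simpa using hne j hj
    · exact fun h => ⟨by simpa using h i, fun j hj => by simpa [hj] using h j⟩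
  simp [this, apply_ite card, prod_ite, filter_ne', card_compl]

theorem prod_eq_zero_and_prod_erase_ne_zero_iff [CommMonoidWithZero R]
    [NoZeroDivisors R] [Nontrivial R] (r : ι → R) :
    (∏ i, r i = 0 ∧ (fun i => ∏ j ∈ univ.erase i, r j) ≠ 0) ↔
      ∃ i, r i = 0 ∧ ∀ j ≠ i, r j ≠ 0 := by
  constructor
  · rintro ⟨hprod, hc⟩
    obtain ⟨i, hi⟩ : ∃ i, ∏ j ∈ univ.erase i, r j ≠ 0 := Function.ne_iff.mp hc
    refine ⟨i, ?_, fun j hj => prod_ne_zero_iff.mp hi j (mem_erase.mpr ⟨hj, mem_univ j⟩)⟩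
    rw [← mul_prod_erase univ r (mem_univ i)] at hprod
    exact (mul_eq_zero.mp hprod).resolve_right hi
  · rintro ⟨i, hi, hne⟩
    refine ⟨prod_eq_zero (mem_univ i) hi, Function.ne_iff.mpr ⟨i, ?_⟩⟩
    exact prod_ne_zero_iff.mpr fun j hj => hne j (ne_of_mem_erase hj)

theorem card_filter_prod_eq_zero_and_prod_erase_ne_zero [CommMonoidWithZero R]
    [NoZeroDivisors R] [Nontrivial R] [Fintype R] [DecidableEq R] :
    #{r : ι → R | ∏ i, r i = 0 ∧ (fun i => ∏ j ∈ univ.erase i, r j) ≠ 0} =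
      Fintype.card ι * (Fintype.card R - 1) ^ (Fintype.card ι - 1) := by
  have : ({r : ι → R | ∏ i, r i = 0 ∧ (fun i => ∏ j ∈ univ.erase i, r j) ≠ 0} : Finset _) =
      univ.biUnion fun i => {r : ι → R | r i = 0 ∧ ∀ j ≠ i, r j ≠ 0} := by
    ext r
    simp only [mem_filter, mem_univ, true_and, mem_biUnion,
      prod_eq_zero_and_prod_erase_ne_zero_iff]
  rw [this, card_biUnion, sum_congr rfl fun i _ => card_filter_eq_zero_and_forall_ne_ne_zero i,
    sum_const, card_univ, smul_eq_mul]
  intro i _ i' _ hii'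
  refine disjoint_left.mpr fun r hr hr' => ?_
  simp only [mem_filter, mem_univ, true_and] at hr hr'
  exact hr'.2 i hii' hr.1

end ZeroPattern

namespace TrivSqZeroExt

variable {ι F M : Type*} [Fintype ι] [DecidableEq ι] [Field F] [Fintype F] [DecidableEq F]
  [AddCommGroup M] [Module F M] [Module Fᵐᵒᵖ M] [IsCentralScalar F M] [Finite M]

theorem card_prod_eq_zero_eq_sum :
    Nat.card {f : ι → TrivSqZeroExt F M // ∏ i, f i = 0} =
      ∑ r : ι → F, if ∏ i, r i = 0 then
        Nat.card {m : ι → M // ∑ i, (∏ j ∈ univ.erase i, r j) • m i = 0} else 0 := by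
  have e : {f : ι → TrivSqZeroExt F M // ∏ i, f i = 0} ≃ Σ r : ι → F,
      {m : ι → M // ∏ i, r i = 0 ∧ ∑ i, (∏ j ∈ univ.erase i, r j) • m i = 0} :=
    (Equiv.subtypeEquiv (Equiv.arrowProdEquivProdArrow ι (fun _ => F) fun _ => M)
      fun f => prod_eq_zero_iff univ f).trans
      (Equiv.subtypeProdEquivSigmaSubtype fun r m => _)
  rw [Nat.card_congr e, Nat.card_sigma]
  refine sum_congr rfl fun r _ => ?_
  split_ifs with hr
  · simp only [hr, true_and]
  · simp [hr]

theorem card_prod_eq_zero :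
    (Nat.card {f : ι → TrivSqZeroExt F M // ∏ i, f i = 0} : ℤ) =
      (Nat.card M : ℤ) ^ Fintype.card ι * ((Fintype.card F : ℤ) ^ Fintype.card ι -
        ((Fintype.card F : ℤ) - 1) ^ Fintype.card ι -
        Fintype.card ι * ((Fintype.card F : ℤ) - 1) ^ (Fintype.card ι - 1)) +
      (Nat.card M : ℤ) ^ (Fintype.card ι - 1) *
        (Fintype.card ι * ((Fintype.card F : ℤ) - 1) ^ (Fintype.card ι - 1)) := by
  rw [card_prod_eq_zero_eq_sum]
  simp_rw [card_sum_smul_eq_zero]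
  rw [sum_ite, sum_const_zero, add_zero, sum_ite, sum_const, sum_const, filter_filter,
    filter_filter]
  have hzero := card_filter_add_card_filter_not (s := ({r : ι → F | ∏ i, r i = 0} : Finset _))
    fun r => (fun i => ∏ j ∈ univ.erase i, r j) = 0
  have hall := card_filter_add_card_filter_not (s := (univ : Finset (ι → F))) fun r => ∏ i, r i = 0
  simp only [filter_filter, ← ne_eq, card_filter_prod_eq_zero_and_prod_erase_ne_zero,
    card_filter_prod_ne_zero, card_univ, Fintype.card_pi, prod_const] at hzero hall ⊢
  have hq : 1 ≤ Fintype.card F := Fintype.card_pos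
  zify at hzero hall
  push_cast [Nat.cast_sub hq, smul_eq_mul] at hzero hall ⊢
  linear_combination (Nat.card M : ℤ) ^ Fintype.card ι * (hzero + hall)

end TrivSqZeroExt

theorem stmt_13 (p : ℕ) (hp : p.Prime) (α : ℕ) (hα : 1 ≤ α) (k : ℕ) (hk : 2 ≤ k) :
    (Nat.card {f : Fin k → TrivSqZeroExt (ZMod p) (Fin (α - 1) → ZMod p) // ∏ i, f i = 0} : ℝ)
        / (Nat.card (TrivSqZeroExt (ZMod p) (Fin (α - 1) → ZMod p)) : ℝ) ^ k
      = ((p : ℝ) ^ (α - 1) * ((p : ℝ) ^ k - (k + p - 1) * ((p : ℝ) - 1) ^ (k - 1))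
          + k * ((p : ℝ) - 1) ^ (k - 1)) / (p : ℝ) ^ (k + α - 1) := by
  have : Fact p.Prime := ⟨hp⟩
  have hM : Nat.card (Fin (α - 1) → ZMod p) = p ^ (α - 1) := by simp
  have hR : Nat.card (TrivSqZeroExt (ZMod p) (Fin (α - 1) → ZMod p)) = p * p ^ (α - 1) :=
    (Nat.card_prod (ZMod p) (Fin (α - 1) → ZMod p)).trans (by rw [Nat.card_zmod, hM])
  have hcount := congrArg (Int.cast : ℤ → ℝ)
    (TrivSqZeroExt.card_prod_eq_zero (ι := Fin k) (F := ZMod p) (M := Fin (α - 1) → ZMod p))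
  rw [hM, Fintype.card_fin, ZMod.card] at hcount
  push_cast at hcount
  obtain ⟨k, rfl⟩ : ∃ k', k = k' + 1 := ⟨k - 1, by omega⟩
  obtain ⟨a, rfl⟩ : ∃ a, α = a + 1 := ⟨α - 1, by omega⟩
  rw [hcount, hR, show k + 1 + (a + 1) - 1 = k + 1 + a by omega]
  push_cast
  have hp0 : (p : ℝ) ≠ 0 := by exact_mod_cast hp.ne_zero
  field_simp
  ring
end

section
/- Let p be a prime and k, α positive integers with k ≥ 2. Define B_k(p;α) = (p^{α-1}(p^k - (k+p-1)(p-1)^{k-1}) + k(p-1)^{k-1}) / p^{k+α-1}. Then B_k(p;α) is strictly decreasing in p for fixed k, α (i.e., if p₁ < p₂ are primes then B_k(p₁;α) > B_k(p₂;α)). -/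
/-- `B_k(p; α) = (p^{α-1}(p^k - (k+p-1)(p-1)^{k-1}) + k(p-1)^{k-1}) / p^{k+α-1}`. -/
noncomputable def B (k p α : ℕ) : ℝ :=
  ((p : ℝ) ^ (α - 1) * ((p : ℝ) ^ k - ((k : ℝ) + p - 1) * ((p : ℝ) - 1) ^ (k - 1))
      + (k : ℝ) * ((p : ℝ) - 1) ^ (k - 1)) / (p : ℝ) ^ (k + α - 1)

/-!
With `x = 1/p`, `B_k(p; α) = 1 - (1 - x)^(k-1) (1 + (k-1) x - k x^α)`. The subtracted polynomial
has derivative `-k (1-x)^(k-2) ((k-1) x (1 - x^(α-1)) + α x^(α-1) (1 - x))`, which is negative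
on `(0, 1)`, so it is strictly decreasing on `[0, 1]` and `B_k(p; α)` decreases as `x = 1/p` does.
-/

/-- The subtracted polynomial, indexed by `n = k - 2` and `m = α - 1` so that no exponent is a
truncated subtraction. -/
noncomputable def BPoly (n m : ℕ) (x : ℝ) : ℝ :=
  (1 - x) ^ (n + 1) * (1 + (n + 1) * x - (n + 2) * x ^ (m + 1))

lemma hasDerivAt_BPoly (n m : ℕ) (x : ℝ) :
    HasDerivAt (BPoly n m)
      (-((n + 2) * (1 - x) ^ n * ((n + 1) * x * (1 - x ^ m) + (m + 1) * x ^ m * (1 - x)))) x := by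
  have hfac := ((hasDerivAt_id x).const_sub 1).fun_pow (n + 1)
  have hpoly := (((hasDerivAt_id x).const_mul ((n : ℝ) + 1)).const_add 1).fun_sub
    ((hasDerivAt_pow (m + 1) x).const_mul ((n : ℝ) + 2))
  refine (hfac.fun_mul hpoly).congr_deriv ?_
  simp only [id, Nat.add_sub_cancel]
  push_cast
  ring

lemma strictAntiOn_BPoly (n m : ℕ) : StrictAntiOn (BPoly n m) (Set.Icc 0 1) := by
  refine strictAntiOn_of_deriv_neg (convex_Icc 0 1)
    (fun x _ => (hasDerivAt_BPoly n m x).continuousAt.continuousWithinAt) fun x hx => ?_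
  rw [interior_Icc, Set.mem_Ioo] at hx
  obtain ⟨hx₀, hx₁⟩ := hx
  rw [(hasDerivAt_BPoly n m x).deriv, neg_lt_zero]
  have hxm : x ^ m ≤ 1 := pow_le_one₀ hx₀.le hx₁.le
  have hbracket : 0 < (n + 1) * x * (1 - x ^ m) + (m + 1) * x ^ m * (1 - x) := by
    have : 0 ≤ (n + 1) * x * (1 - x ^ m) := by
      apply mul_nonneg <;> [positivity; linarith]
    have : 0 < (m + 1) * x ^ m * (1 - x) := mul_pos (by positivity) (by linarith)
    linarith
  have : 0 < (1 - x) ^ n := pow_pos (by linarith) n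
  positivity

lemma B_eq_one_sub_BPoly (n m p : ℕ) (hp : p ≠ 0) :
    B (n + 2) p (m + 1) = 1 - BPoly n m (p : ℝ)⁻¹ := by
  have hp' : (p : ℝ) ≠ 0 := by exact_mod_cast hp
  rw [B, BPoly, show n + 2 + (m + 1) - 1 = n + m + 2 by omega]
  simp only [Nat.add_sub_cancel]
  rw [show 1 - (p : ℝ)⁻¹ = (p - 1) / p by field_simp, div_pow, inv_pow]
  field_simp
  push_cast
  ring

theorem stmt_14_general (k p₁ p₂ α : ℕ) (hk : 2 ≤ k) (hα : 1 ≤ α)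
    (hp₁ : p₁.Prime) (h : p₁ < p₂) :
    B k p₁ α > B k p₂ α := by
  obtain ⟨n, rfl⟩ : ∃ n, k = n + 2 := ⟨k - 2, by omega⟩
  obtain ⟨m, rfl⟩ : ∃ m, α = m + 1 := ⟨α - 1, by omega⟩
  have hp₁pos : (0 : ℝ) < p₁ := by exact_mod_cast hp₁.pos
  have hmem : ∀ p : ℕ, p₁ ≤ p → (p : ℝ)⁻¹ ∈ Set.Icc (0 : ℝ) 1 := fun p hp =>
    ⟨by positivity, inv_le_one_of_one_le₀ (by exact_mod_cast hp₁.one_lt.le.trans hp)⟩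
  have hlt : (p₂ : ℝ)⁻¹ < (p₁ : ℝ)⁻¹ := inv_strictAnti₀ hp₁pos (by exact_mod_cast h)
  rw [B_eq_one_sub_BPoly n m p₁ hp₁.ne_zero, B_eq_one_sub_BPoly n m p₂ (by omega)]
  linarith [strictAntiOn_BPoly n m (hmem p₂ h.le) (hmem p₁ le_rfl) hlt]

theorem stmt_14 (k p₁ p₂ α : ℕ) (hk : 2 ≤ k) (hα : 1 ≤ α)
    (hp₁ : p₁.Prime) (hp₂ : p₂.Prime) (h : p₁ < p₂) :
    B k p₁ α > B k p₂ α :=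
  stmt_14_general k p₁ p₂ α hk hα hp₁ h
end

section
/- With B_k(p;α) = (p^{α-1}(p^k - (k+p-1)(p-1)^{k-1}) + k(p-1)^{k-1}) / p^{k+α-1}: for k = 2 and k = 3 we have B_k(3;1) > B_k(2;2), while for every integer k ≥ 4 we have B_k(3;1) < B_k(2;2). Equivalently, (3^k - 2^k)/3^k > (2^{k+1} - k - 2)/2^{k+1} holds exactly for k ∈ {2,3} among integers k ≥ 2. -/
lemma B_three_one {k : ℕ} (hk : 1 ≤ k) : B k 3 1 = ((3 : ℝ) ^ k - 2 ^ k) / 3 ^ k := by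
  obtain ⟨m, rfl⟩ := Nat.exists_eq_add_of_le' hk
  simp only [B, Nat.add_sub_cancel, Nat.sub_self, pow_zero, one_mul]
  push_cast
  ring

lemma B_two_two {k : ℕ} (hk : 1 ≤ k) :
    B k 2 2 = ((2 : ℝ) ^ (k + 1) - k - 2) / 2 ^ (k + 1) := by
  obtain ⟨m, rfl⟩ := Nat.exists_eq_add_of_le' hk
  simp only [B, Nat.add_sub_cancel, show m + 1 + 2 - 1 = m + 2 by omega]
  push_cast
  ring

lemma add_two_mul_three_pow_lt {k : ℕ} (hk : 4 ≤ k) : (k + 2) * 3 ^ k < 2 * 4 ^ k := by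
  induction k, hk using Nat.le_induction with
  | base => norm_num
  | succ n hn ih =>
    calc (n + 1 + 2) * 3 ^ (n + 1) ≤ 4 * ((n + 2) * 3 ^ n) := by
          rw [pow_succ]; nlinarith [pow_pos (by norm_num : 0 < 3) n]
      _ < 4 * (2 * 4 ^ n) := by omega
      _ = 2 * 4 ^ (n + 1) := by ring

lemma three_pow_sub_two_pow_div_lt {k : ℕ} (hk : 4 ≤ k) :
    ((3 : ℝ) ^ k - 2 ^ k) / 3 ^ k < ((2 : ℝ) ^ (k + 1) - k - 2) / 2 ^ (k + 1) := by
  have key : ((k : ℝ) + 2) * 3 ^ k < 2 * (2 ^ k * 2 ^ k) := by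
    rw [← mul_pow]; exact_mod_cast add_two_mul_three_pow_lt hk
  rw [div_lt_div_iff₀ (by positivity) (by positivity), pow_succ]
  nlinarith [pow_pos (by norm_num : (0 : ℝ) < 3) k, pow_pos (by norm_num : (0 : ℝ) < 2) k]

theorem stmt_16 :
    (B 2 3 1 > B 2 2 2 ∧ B 3 3 1 > B 3 2 2) ∧
      (∀ k : ℕ, 4 ≤ k → B k 3 1 < B k 2 2) ∧
      (∀ k : ℕ, 2 ≤ k →
        (((3 : ℝ) ^ k - 2 ^ k) / 3 ^ k > ((2 : ℝ) ^ (k + 1) - k - 2) / 2 ^ (k + 1)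
          ↔ k = 2 ∨ k = 3)) := by
  refine ⟨⟨by norm_num [B], by norm_num [B]⟩, fun k hk => ?_, fun k hk => ⟨fun h => ?_, ?_⟩⟩
  · rw [B_three_one (by omega), B_two_two (by omega)]
    exact three_pow_sub_two_pow_div_lt hk
  · by_contra hsmall
    exact (three_pow_sub_two_pow_div_lt (by omega)).not_gt h
  · rintro (rfl | rfl) <;> norm_num
end
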